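/- arXiv:1409.2772 — 2 statements merged into one kernel-verified Lean document; each statement's English description precedes it below -/
import Mathlib

section
/- Every point a ≥ −1 is a point of convexity of the function f(x) = x·eˣ relative to the whole real line, i.e., the tangent line to the graph of f at any a ≥ −1 lies below the graph: for all a ≥ −1 and all x ∈ ℝ, x·eˣ ≥ a·eᵃ + (a+1)eᵃ·(x − a). -/
/-!
With `t = x - a`, the gap between `x eˣ` and the tangent line at `a` factors as
`eᵃ · ((a + 1)(eᵗ - 1 - t) + (1 - (1 - t) eᵗ))`. Both summands are nonnegative:
the first by `eᵗ ≥ 1 + t` and `a + 1 ≥ 0`, the second by `1 - t ≤ e⁻ᵗ`.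
-/

open Real

lemma one_sub_mul_exp_le_one (t : ℝ) : (1 - t) * exp t ≤ 1 :=
  calc (1 - t) * exp t ≤ exp (-t) * exp t :=
        mul_le_mul_of_nonneg_right (one_sub_le_exp_neg t) (exp_nonneg t)
    _ = 1 := by rw [← exp_add, neg_add_cancel, exp_zero]

lemma mul_exp_sub_tangent (a x : ℝ) :
    x * exp x - (a * exp a + (a + 1) * exp a * (x - a)) =
      exp a * ((a + 1) * (exp (x - a) - 1 - (x - a)) + (1 - (1 - (x - a)) * exp (x - a))) := by
  have hsplit : exp x = exp a * exp (x - a) := by rw [← exp_add, add_sub_cancel]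
  rw [hsplit]
  ring

theorem xexp_tangent_below (a : ℝ) (ha : -1 ≤ a) (x : ℝ) :
    a * Real.exp a + (a + 1) * Real.exp a * (x - a) ≤ x * Real.exp x := by
  have h_exp_ge : 0 ≤ exp (x - a) - 1 - (x - a) := by linarith [add_one_le_exp (x - a)]
  have h_exp_neg_ge : 0 ≤ 1 - (1 - (x - a)) * exp (x - a) := by
    linarith [one_sub_mul_exp_le_one (x - a)]
  have ha_one : 0 ≤ a + 1 := by linarith
  rw [← sub_nonneg, mul_exp_sub_tangent]
  exact mul_nonneg (exp_nonneg a) (add_nonneg (mul_nonneg ha_one h_exp_ge) h_exp_neg_ge)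
end

section
/- Let f be a real-valued function on an interval I and let a, b, c ∈ I. If the three midpoints (a+b)/2, (a+c)/2, (b+c)/2 are points of convexity of f relative to I, then (f(a) + f(b) + f(c))/3 + f((a+b+c)/3) ≥ (2/3)[f((a+b)/2) + f((a+c)/2) + f((b+c)/2)]. -/
/-!
Let `g = (a + b + c) / 3` and let `z` be the one of `a, b, c` farthest from `g`. Then the two
midpoints involving `z` lie on the segment `[g, z]`, so each is a convex combination of `g`
and `z`; as they add up to `(3 g + z) / 2`, the weights of `f g` and `f z` in the sum of the
two resulting inequalities are `3 / 2` and `1 / 2`. Adding the midpoint inequality for the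
remaining pair gives Popoviciu's inequality.
-/

open Set

def IsPointOfConvexity (I : Set ℝ) (f : ℝ → ℝ) (p : ℝ) : Prop :=
  ∀ (n : ℕ) (x : Fin n → ℝ) (lam : Fin n → ℝ),
    (∀ k, x k ∈ I) → (∀ k, 0 < lam k) → (∑ k, lam k = 1) →
    (∑ k, lam k * x k = p) → f p ≤ ∑ k, lam k * f (x k)

namespace IsPointOfConvexity

variable {I : Set ℝ} {f : ℝ → ℝ} {p q u v : ℝ}

theorem le_of_eq_combo (hp : IsPointOfConvexity I f p) (hu : u ∈ I) (hv : v ∈ I) {μ ν : ℝ}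
    (hμ : 0 ≤ μ) (hν : 0 ≤ ν) (hμν : μ + ν = 1) (hcomb : μ * u + ν * v = p) :
    f p ≤ μ * f u + ν * f v := by
  rcases hμ.eq_or_lt with rfl | hμ
  · obtain rfl : ν = 1 := by linarith
    obtain rfl : v = p := by linarith
    simp
  rcases hν.eq_or_lt with rfl | hν
  · obtain rfl : μ = 1 := by linarith
    obtain rfl : u = p := by linarith
    simp
  simpa [Fin.sum_univ_two] using hp 2 ![u, v] ![μ, ν]
    (by simp [Fin.forall_fin_two, hu, hv]) (by simp [Fin.forall_fin_two, hμ, hν])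
    (by simpa [Fin.sum_univ_two]) (by simpa [Fin.sum_univ_two])

theorem add_le_of_mem_segment (hp : IsPointOfConvexity I f p) (hq : IsPointOfConvexity I f q)
    (hu : u ∈ I) (hv : v ∈ I) (hpS : p ∈ segment ℝ u v) (hqS : q ∈ segment ℝ u v) {μ ν : ℝ}
    (hμν : μ + ν = 2) (hsum : p + q = μ * u + ν * v) :
    f p + f q ≤ μ * f u + ν * f v := by
  obtain ⟨α, β, hα, hβ, hαβ, rfl⟩ := hpS
  obtain ⟨γ, δ, hγ, hδ, hγδ, rfl⟩ := hqS
  simp only [smul_eq_mul] at hp hq hsum ⊢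
  have hfp := hp.le_of_eq_combo hu hv hα hβ hαβ rfl
  have hfq := hq.le_of_eq_combo hu hv hγ hδ hγδ rfl
  rcases eq_or_ne u v with rfl | huv
  · linear_combination hfp + hfq - f u * hμν + f u * hαβ + f u * hγδ
  · have hαγ : α + γ = μ := by
      have : (α + γ - μ) * (u - v) = 0 := by linear_combination hsum + v * hμν - v * hαβ - v * hγδ
      linarith [(mul_eq_zero.mp this).resolve_right (sub_ne_zero.mpr huv)]
    linear_combination hfp + hfq + (f u - f v) * hαγ - f v * hμν + f v * hαβ + f v * hγδ

end IsPointOfConvexity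

theorem add_div_two_mem_segment_of_abs_sub_le {g x z : ℝ} (h : |x - g| ≤ |z - g|) :
    (x + z) / 2 ∈ segment ℝ g z := by
  rw [segment_eq_uIcc, mem_uIcc]
  rcases le_total g z with hgz | hzg
  · rw [abs_of_nonneg (sub_nonneg.mpr hgz)] at h
    have := abs_le.mp h
    left; constructor <;> linarith
  · rw [abs_of_nonpos (sub_nonpos.mpr hzg)] at h
    have := abs_le.mp h
    right; constructor <;> linarith

theorem popoviciu_of_abs_sub_le {I : Set ℝ} {f : ℝ → ℝ} {x y z g : ℝ}
    (hx : x ∈ I) (hy : y ∈ I) (hz : z ∈ I) (hgI : g ∈ I) (hg : x + y + z = 3 * g)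
    (hxy : IsPointOfConvexity I f ((x + y) / 2)) (hxz : IsPointOfConvexity I f ((x + z) / 2))
    (hyz : IsPointOfConvexity I f ((y + z) / 2))
    (hxg : |x - g| ≤ |z - g|) (hyg : |y - g| ≤ |z - g|) :
    (2 / 3) * (f ((x + y) / 2) + f ((x + z) / 2) + f ((y + z) / 2)) ≤
      (f x + f y + f z) / 3 + f g := by
  have hfxy : f ((x + y) / 2) ≤ 1 / 2 * f x + 1 / 2 * f y :=
    hxy.le_of_eq_combo hx hy (by norm_num) (by norm_num) (by norm_num) (by ring)
  have hfz : f ((x + z) / 2) + f ((y + z) / 2) ≤ 3 / 2 * f g + 1 / 2 * f z :=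
    hxz.add_le_of_mem_segment hyz hgI hz (add_div_two_mem_segment_of_abs_sub_le hxg)
      (add_div_two_mem_segment_of_abs_sub_le hyg) (by norm_num) (by linarith)
  linarith

theorem popoviciu_points_of_convexity
    (I : Set ℝ) (hI : Convex ℝ I)
    (f : ℝ → ℝ) (a b c : ℝ)
    (ha : a ∈ I) (hb : b ∈ I) (hc : c ∈ I)
    (hconv : ∀ p ∈ ({(a + b) / 2, (a + c) / 2, (b + c) / 2} : Set ℝ),
      ∀ (n : ℕ) (x : Fin n → ℝ) (lam : Fin n → ℝ),
        (∀ k, x k ∈ I) → (∀ k, 0 < lam k) → (∑ k, lam k = 1) →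
        (∑ k, lam k * x k = p) → f p ≤ ∑ k, lam k * f (x k)) :
    (2 / 3) * (f ((a + b) / 2) + f ((a + c) / 2) + f ((b + c) / 2)) ≤
      (f a + f b + f c) / 3 + f ((a + b + c) / 3) := by
  set g := (a + b + c) / 3
  have hab : IsPointOfConvexity I f ((a + b) / 2) := hconv _ (by simp)
  have hac : IsPointOfConvexity I f ((a + c) / 2) := hconv _ (by simp)
  have hbc : IsPointOfConvexity I f ((b + c) / 2) := hconv _ (by simp)
  have hgI : g ∈ I := by
    have hm : (1 / 2 : ℝ) • a + (1 / 2 : ℝ) • b ∈ I :=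
      hI ha hb (by norm_num) (by norm_num) (by norm_num)
    convert hI hm hc (by norm_num : (0 : ℝ) ≤ 2 / 3) (by norm_num : (0 : ℝ) ≤ 1 / 3) (by norm_num)
      using 1
    simp only [g, smul_eq_mul]
    ring
  obtain ⟨hag, hbg⟩ | ⟨hag, hcg⟩ | ⟨hbg, hcg⟩ :
      (|a - g| ≤ |c - g| ∧ |b - g| ≤ |c - g|) ∨ (|a - g| ≤ |b - g| ∧ |c - g| ≤ |b - g|) ∨
        (|b - g| ≤ |a - g| ∧ |c - g| ≤ |a - g|) := by
    grind
  · exact popoviciu_of_abs_sub_le ha hb hc hgI (by ring) hab hac hbc hag hbg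
  · have := popoviciu_of_abs_sub_le ha hc hb hgI (by ring) hac hab (by rwa [add_comm]) hag hcg
    rw [add_comm c b] at this
    linarith
  · have := popoviciu_of_abs_sub_le hb hc ha hgI (by ring) hbc (by rwa [add_comm])
      (by rwa [add_comm]) hbg hcg
    rw [add_comm b a, add_comm c a] at this
    linarith
end
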